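/- Let (F, part, tg) be a p-PW-SAT instance and let determined, depth, setCounter, incCounter, countInit and countMonotone1 be the formulas defined below. Let K be a Kripke structure with a world w_0 such that K,w_0 ⊨ determined ∧ depth ∧ setCounter ∧ incCounter ∧ countInit ∧ countMonotone1. For j ∈ {0,…,n} and p ∈ {1,…,k} set T_p(j) := |{ℓ : 1 ≤ ℓ ≤ j, part(ℓ)=p, K,w_0 ⊨ q_ℓ}| and F_p(j) := |{ℓ : 1 ≤ ℓ ≤ j, part(ℓ)=p, K,w_0 ⊭ q_ℓ}|. Then for every path π ∈ Paths(w_0), every p ∈ {1,…,k} and every i with 1 ≤ i ≤ n+1 it holds that K,π(i) ⊨ tr_p^{T_p(i−1)} and K,π(i) ⊨ fl_p^{F_p(i−1)}. -/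

import Mathlib

/-- Syntax of CTL formulas over a type `V` of propositional variables. -/
inductive CTL (V : Type) : Type
  | tt : CTL V
  | ff : CTL V
  | var : V → CTL V
  | and : CTL V → CTL V → CTL V
  | or : CTL V → CTL V → CTL V
  | not : CTL V → CTL V
  | AX : CTL V → CTL V
  | EX : CTL V → CTL V
  | AF : CTL V → CTL V
  | EF : CTL V → CTL V
  | AG : CTL V → CTL V
  | EG : CTL V → CTL V
  | AU : CTL V → CTL V → CTL V
  | EU : CTL V → CTL V → CTL V
  deriving DecidableEq

/-- `φ → ψ` abbreviates `¬φ ∨ ψ`. -/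
def CTL.impl {V : Type} (φ ψ : CTL V) : CTL V := .or (.not φ) ψ

def bigAndList {V : Type} : List (CTL V) → CTL V
  | [] => .tt
  | φ :: l => .and φ (bigAndList l)

/-- Conjunction over `i ∈ {a, …, b}` (the empty conjunction `⊤` if `b < a`). -/
def conjIcc {V : Type} (a b : ℕ) (f : ℕ → CTL V) : CTL V :=
  bigAndList ((List.range' a (b + 1 - a)).map f)

/-- Conjunction over `i ∈ {0, …, c-1}`. -/
def conjRange {V : Type} (c : ℕ) (f : ℕ → CTL V) : CTL V :=
  bigAndList ((List.range c).map f)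

/-- A Kripke structure: a finite nonempty set of worlds, a total successor
relation, and a labeling of worlds with propositional variables. -/
structure Kripke (V : Type) : Type 1 where
  W : Type
  [instFin : Fintype W]
  [instNonempty : Nonempty W]
  R : W → W → Prop
  total : ∀ w, ∃ w', R w w'
  val : W → V → Prop

/-- A path is an infinite `R`-sequence of worlds. -/
def Kripke.IsPath {V : Type} (K : Kripke V) (π : ℕ → K.W) : Prop :=
  ∀ i, K.R (π i) (π (i + 1))

/-- Semantics of CTL: `Sat K φ w` means `K, w ⊨ φ`. -/
def Sat {V : Type} (K : Kripke V) : CTL V → K.W → Prop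
  | .tt, _ => True
  | .ff, _ => False
  | .var p, w => K.val w p
  | .and φ ψ, w => Sat K φ w ∧ Sat K ψ w
  | .or φ ψ, w => Sat K φ w ∨ Sat K ψ w
  | .not φ, w => ¬ Sat K φ w
  | .AX φ, w => ∀ π, K.IsPath π → π 0 = w → Sat K φ (π 1)
  | .EX φ, w => ∃ π, K.IsPath π ∧ π 0 = w ∧ Sat K φ (π 1)
  | .AF φ, w => ∀ π, K.IsPath π → π 0 = w → ∃ i, Sat K φ (π i)
  | .EF φ, w => ∃ π, K.IsPath π ∧ π 0 = w ∧ ∃ i, Sat K φ (π i)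
  | .AG φ, w => ∀ π, K.IsPath π → π 0 = w → ∀ i, Sat K φ (π i)
  | .EG φ, w => ∃ π, K.IsPath π ∧ π 0 = w ∧ ∀ i, Sat K φ (π i)
  | .AU φ ψ, w => ∀ π, K.IsPath π → π 0 = w →
      ∃ i, Sat K ψ (π i) ∧ ∀ j, j < i → Sat K φ (π j)
  | .EU φ ψ, w => ∃ π, K.IsPath π ∧ π 0 = w ∧
      ∃ i, Sat K ψ (π i) ∧ ∀ j, j < i → Sat K φ (π j)

/-- A formula is satisfiable if it holds at some world of some Kripke structure. -/
def CTL.Satisfiable {V : Type} (φ : CTL V) : Prop :=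
  ∃ (K : Kripke V) (w : K.W), Sat K φ w

/-- The propositional variables used in the p-PW-SAT reductions:
`q i`, `t p` (= t_{↑p}), `f p` (= f_{↑p}), `tr p j`, `fl p j`, `d i`, `m b`. -/
inductive PVar : Type
  | q : ℕ → PVar
  | t : ℕ → PVar
  | f : ℕ → PVar
  | tr : ℕ → ℕ → PVar
  | fl : ℕ → ℕ → PVar
  | d : ℕ → PVar
  | m : ℕ → PVar
  deriving DecidableEq

def vq (i : ℕ) : CTL PVar := .var (.q i)
def vt (p : ℕ) : CTL PVar := .var (.t p)
def vf (p : ℕ) : CTL PVar := .var (.f p)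
def vtr (p j : ℕ) : CTL PVar := .var (.tr p j)
def vfl (p j : ℕ) : CTL PVar := .var (.fl p j)
def vd (i : ℕ) : CTL PVar := .var (.d i)
def vm (b : ℕ) : CTL PVar := .var (.m b)

/-- A purely propositional formula (no CTL-operators). -/
def CTL.IsProp {V : Type} : CTL V → Prop
  | .tt => True
  | .ff => True
  | .var _ => True
  | .and φ ψ => φ.IsProp ∧ ψ.IsProp
  | .or φ ψ => φ.IsProp ∧ ψ.IsProp
  | .not φ => φ.IsProp
  | _ => False

/-- The set of variables occurring in a formula. -/
def CTL.vars {V : Type} : CTL V → Set V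
  | .tt => ∅
  | .ff => ∅
  | .var v => {v}
  | .and φ ψ => φ.vars ∪ ψ.vars
  | .or φ ψ => φ.vars ∪ ψ.vars
  | .not φ => φ.vars
  | .AX φ => φ.vars
  | .EX φ => φ.vars
  | .AF φ => φ.vars
  | .EF φ => φ.vars
  | .AG φ => φ.vars
  | .EG φ => φ.vars
  | .AU φ ψ => φ.vars ∪ ψ.vars
  | .EU φ ψ => φ.vars ∪ ψ.vars

/-- Evaluation of a propositional formula under a truth assignment
(temporal operators, which do not occur in propositional formulas, are
mapped to `False`). -/
def evalProp {V : Type} (a : V → Prop) : CTL V → Prop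
  | .tt => True
  | .ff => False
  | .var v => a v
  | .and φ ψ => evalProp a φ ∧ evalProp a ψ
  | .or φ ψ => evalProp a φ ∨ evalProp a ψ
  | .not φ => ¬ evalProp a φ
  | _ => False

/-- `n[p]`, the number of indices `i ∈ {1,…,n}` with `part i = p`. -/
def nP (n : ℕ) (part : ℕ → ℕ) (p : ℕ) : ℕ :=
  ((Finset.Icc 1 n).filter (fun i => part i = p)).card

/-- `(F, part, tg)` is a yes-instance of p-PW-SAT: some assignment to the
variables `q 1, …, q n` satisfies `F` and sets, for every part `p ∈ {1,…,k}`,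
exactly `tg p` of the variables of part `p` to true. -/
def YesInstance (n k : ℕ) (part : ℕ → ℕ) (tg : ℕ → ℕ) (F : CTL PVar) : Prop :=
  ∃ a : ℕ → Bool,
    evalProp (fun v => match v with | PVar.q i => a i = true | _ => False) F ∧
    ∀ p, 1 ≤ p → p ≤ k →
      ((Finset.Icc 1 n).filter (fun i => part i = p ∧ a i = true)).card = tg p

/- The relevant conjuncts of φ_F (as in the {AX,AG} reduction). -/

def determined (n : ℕ) : CTL PVar :=
  .AG (conjIcc 1 n (fun i =>
    .and ((vq i).impl (.AX (vq i))) ((CTL.not (vq i)).impl (.AX (.not (vq i))))))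

def depthForm (n : ℕ) : CTL PVar :=
  .AG (conjIcc 0 n (fun i =>
    (CTL.and (vd i) (.not (vd (i+1)))).impl (.AX (.and (vd (i+1)) (.not (vd (i+2)))))))

def setCounter (n : ℕ) (part : ℕ → ℕ) : CTL PVar :=
  .AG (conjIcc 1 n (fun i =>
    (CTL.and (vd i) (.not (vd (i+1)))).impl
      (.and ((vq i).impl (vt (part i))) ((CTL.not (vq i)).impl (vf (part i))))))

def incCounter (n k : ℕ) (part : ℕ → ℕ) : CTL PVar :=
  .AG (conjIcc 1 k (fun p => conjIcc 0 (nP n part p) (fun j =>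
    .and ((vt p).impl ((vtr p j).impl (.AX (vtr p (j+1)))))
         ((vf p).impl ((vfl p j).impl (.AX (vfl p (j+1))))))))

def countInit (k : ℕ) : CTL PVar :=
  .and (.and (vd 0) (.not (vd 1)))
       (.AG (conjIcc 1 k (fun p => .and (vtr p 0) (vfl p 0))))

def countMonotone1 (n k : ℕ) (part : ℕ → ℕ) : CTL PVar :=
  .AG (conjIcc 1 k (fun p => conjIcc 0 (nP n part p) (fun j =>
    .and ((vtr p j).impl (.AG (vtr p j))) ((vfl p j).impl (.AG (vfl p j))))))

/-- `T_p(j)`: the number of `ℓ ∈ {1,…,j}` of part `p` whose variable `q ℓ`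
is true at `w₀`. -/
noncomputable def Tcount (K : Kripke PVar) (w0 : K.W) (part : ℕ → ℕ) (p j : ℕ) : ℕ :=
  Set.ncard {ℓ : ℕ | 1 ≤ ℓ ∧ ℓ ≤ j ∧ part ℓ = p ∧ K.val w0 (PVar.q ℓ)}

/-- `F_p(j)`: the number of `ℓ ∈ {1,…,j}` of part `p` whose variable `q ℓ`
is false at `w₀`. -/
noncomputable def Fcount (K : Kripke PVar) (w0 : K.W) (part : ℕ → ℕ) (p j : ℕ) : ℕ :=
  Set.ncard {ℓ : ℕ | 1 ≤ ℓ ∧ ℓ ≤ j ∧ part ℓ = p ∧ ¬ K.val w0 (PVar.q ℓ)}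

/-!
Along a path from `w₀`, `determined` keeps every `q ℓ` at its value at `w₀`, and `depth` puts
the path at depth exactly `i` at time `i`. Hence `setCounter` raises the flag `t_{↑p}` (resp.
`f_{↑p}`) at time `ℓ` whenever `part ℓ = p` and `q ℓ` is true (resp. false) at `w₀`. A raised
flag moves the counter one index up at the next step (`incCounter`) and `countMonotone1` keeps
its index otherwise, so the counter, started at index `0` by `countInit`, tracks the number of
flags raised so far.
-/

section Semantics

variable {V : Type} {K : Kripke V}

theorem sat_impl_iff {φ ψ : CTL V} {w : K.W} :
    Sat K (φ.impl ψ) w ↔ (Sat K φ w → Sat K ψ w) :=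
  imp_iff_not_or.symm

theorem sat_bigAndList_iff {L : List (CTL V)} {w : K.W} :
    Sat K (bigAndList L) w ↔ ∀ φ ∈ L, Sat K φ w := by
  induction L with
  | nil => simp [bigAndList, Sat]
  | cons φ L ih => simp [bigAndList, Sat, ih]

theorem sat_conjIcc_iff {a b : ℕ} {f : ℕ → CTL V} {w : K.W} :
    Sat K (conjIcc a b f) w ↔ ∀ i, a ≤ i → i ≤ b → Sat K (f i) w := by
  simp only [conjIcc, sat_bigAndList_iff, List.forall_mem_map, List.mem_range'_1]
  exact forall_congr' fun i => ⟨fun h h1 h2 => h ⟨h1, by omega⟩, fun h hi => h hi.1 (by omega)⟩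

theorem Kripke.IsPath.shift {π : ℕ → K.W} (hπ : K.IsPath π) (i : ℕ) :
    K.IsPath (fun j => π (i + j)) := fun j => by
  simpa only [Nat.add_assoc] using hπ (i + j)

theorem Kripke.IsPath.sat_of_sat_AG {π : ℕ → K.W} (hπ : K.IsPath π) {φ : CTL V} {i : ℕ}
    (h : Sat K (.AG φ) (π i)) (j : ℕ) : Sat K φ (π (i + j)) :=
  h _ (hπ.shift i) rfl j

theorem Kripke.IsPath.sat_of_sat_AX {π : ℕ → K.W} (hπ : K.IsPath π) {φ : CTL V} {i : ℕ}
    (h : Sat K (.AX φ) (π i)) : Sat K φ (π (i + 1)) :=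
  h _ (hπ.shift i) rfl

theorem Kripke.IsPath.sat_of_forall_impl_AX {π : ℕ → K.W} (hπ : K.IsPath π) {φ : CTL V}
    (hstep : ∀ i, Sat K (φ.impl (.AX φ)) (π i)) (h0 : Sat K φ (π 0)) (i : ℕ) :
    Sat K φ (π i) := by
  induction i with
  | zero => exact h0
  | succ i ih => exact hπ.sat_of_sat_AX (sat_impl_iff.1 (hstep i) ih)

end Semantics

section Counting

/-- `Tcount` and `Fcount` unfold to instances of this count. -/
noncomputable def countIcc (Q : ℕ → Prop) (j : ℕ) : ℕ :=
  Set.ncard {ℓ : ℕ | 1 ≤ ℓ ∧ ℓ ≤ j ∧ Q ℓ}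

variable (Q : ℕ → Prop) [DecidablePred Q]

theorem countIcc_eq_card (j : ℕ) : countIcc Q j = ((Finset.Icc 1 j).filter Q).card := by
  rw [countIcc, ← Set.ncard_coe_finset]
  congr 1
  ext ℓ
  simp [and_assoc]

theorem countIcc_zero : countIcc Q 0 = 0 := by
  simp [countIcc_eq_card]

theorem countIcc_succ (j : ℕ) :
    countIcc Q (j + 1) = countIcc Q j + if Q (j + 1) then 1 else 0 := by
  simp only [countIcc_eq_card, Finset.card_filter]
  exact Finset.sum_Icc_succ_top (by omega) _

theorem countIcc_le_nP {Q : ℕ → Prop} {n : ℕ} {part : ℕ → ℕ} {p : ℕ}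
    (hQ : ∀ ℓ, Q ℓ → part ℓ = p) {j : ℕ} (hj : j ≤ n) : countIcc Q j ≤ nP n part p := by
  classical
  rw [countIcc_eq_card, nP]
  refine Finset.card_le_card fun ℓ hℓ => ?_
  simp only [Finset.mem_filter, Finset.mem_Icc] at hℓ ⊢
  exact ⟨⟨hℓ.1.1, hℓ.1.2.trans hj⟩, hQ ℓ hℓ.2⟩

end Counting

theorem Kripke.IsPath.sat_counter {V : Type} {K : Kripke V} {π : ℕ → K.W} (hπ : K.IsPath π)
    {c : ℕ → CTL V} {u : CTL V} {Q : ℕ → Prop} {n N : ℕ}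
    (hstart : Sat K (c 0) (π 1))
    (hflag : ∀ i < n, Q (i + 1) → Sat K u (π (i + 1)))
    (hinc : ∀ i j, j ≤ N → Sat K (u.impl ((c j).impl (.AX (c (j + 1))))) (π i))
    (hkeep : ∀ i j, j ≤ N → Sat K ((c j).impl (.AG (c j))) (π i))
    (hN : ∀ i ≤ n, countIcc Q i ≤ N) :
    ∀ i ≤ n, Sat K (c (countIcc Q i)) (π (i + 1)) := by
  classical
  intro i hi
  induction i with
  | zero => rwa [countIcc_zero]
  | succ i ih =>
    have hc := ih (by omega)
    have hj := hN i (by omega)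
    rw [countIcc_succ]
    by_cases hQ : Q (i + 1)
    · rw [if_pos hQ]
      have hu := hflag i (by omega) hQ
      exact hπ.sat_of_sat_AX (sat_impl_iff.1 (sat_impl_iff.1 (hinc _ _ hj) hu) hc)
    · rw [if_neg hQ, Nat.add_zero]
      exact hπ.sat_of_sat_AG (sat_impl_iff.1 (hkeep _ _ hj) hc) 1

section Reduction

variable {K : Kripke PVar} {π : ℕ → K.W}

theorem Kripke.IsPath.sat_vq_iff (hπ : K.IsPath π) {n : ℕ} (hdet : Sat K (determined n) (π 0))
    {ℓ : ℕ} (hℓ1 : 1 ≤ ℓ) (hℓn : ℓ ≤ n) (i : ℕ) :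
    Sat K (vq ℓ) (π i) ↔ Sat K (vq ℓ) (π 0) := by
  have hstep i := sat_conjIcc_iff.1 (hdet π hπ rfl i) ℓ hℓ1 hℓn
  by_cases h0 : Sat K (vq ℓ) (π 0)
  · exact iff_of_true (hπ.sat_of_forall_impl_AX (fun i => (hstep i).1) h0 i) h0
  · exact iff_of_false (hπ.sat_of_forall_impl_AX (fun i => (hstep i).2) h0 i) h0

theorem Kripke.IsPath.sat_depth (hπ : K.IsPath π) {n : ℕ} (hdepth : Sat K (depthForm n) (π 0))
    (h0 : Sat K (.and (vd 0) (.not (vd 1))) (π 0)) :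
    ∀ i ≤ n + 1, Sat K (.and (vd i) (.not (vd (i + 1)))) (π i) := by
  intro i hi
  induction i with
  | zero => exact h0
  | succ i ih =>
    have hstep := sat_conjIcc_iff.1 (hdepth π hπ rfl i) i (Nat.zero_le i) (by omega)
    exact hπ.sat_of_sat_AX (sat_impl_iff.1 hstep (ih (by omega)))

end Reduction

theorem statement11_general (n k : ℕ) (part : ℕ → ℕ)
    (K : Kripke PVar) (w0 : K.W)
    (h : Sat K (.and (determined n) (.and (depthForm n) (.and (setCounter n part)
          (.and (incCounter n k part)
            (.and (countInit k) (countMonotone1 n k part)))))) w0) :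
    ∀ π, K.IsPath π → π 0 = w0 →
      ∀ p, 1 ≤ p → p ≤ k → ∀ i, 1 ≤ i → i ≤ n + 1 →
        Sat K (vtr p (Tcount K w0 part p (i-1))) (π i) ∧
        Sat K (vfl p (Fcount K w0 part p (i-1))) (π i) := by
  obtain ⟨hdet, hdepth, hset, hinc, ⟨hd0, hinit⟩, hkeep⟩ := h
  rintro π hπ rfl p hp1 hpk
  have hflags : ∀ i < n, Sat K ((vq (i + 1)).impl (vt (part (i + 1)))) (π (i + 1)) ∧
      Sat K ((CTL.not (vq (i + 1))).impl (vf (part (i + 1)))) (π (i + 1)) := fun i hi =>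
    sat_impl_iff.1 (sat_conjIcc_iff.1 (hset π hπ rfl (i + 1)) (i + 1) (by omega) (by omega))
      (hπ.sat_depth hdepth hd0 (i + 1) (by omega))
  have hinc_p i j (hj : j ≤ nP n part p) :=
    sat_conjIcc_iff.1 (sat_conjIcc_iff.1 (hinc π hπ rfl i) p hp1 hpk) j (Nat.zero_le j) hj
  have hkeep_p i j (hj : j ≤ nP n part p) :=
    sat_conjIcc_iff.1 (sat_conjIcc_iff.1 (hkeep π hπ rfl i) p hp1 hpk) j (Nat.zero_le j) hj
  have hstart := sat_conjIcc_iff.1 (hinit π hπ rfl 1) p hp1 hpk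
  have htr : ∀ i ≤ n, Sat K (vtr p (Tcount K (π 0) part p i)) (π (i + 1)) :=
    hπ.sat_counter hstart.1
      (fun i hi hQ => hQ.1 ▸ sat_impl_iff.1 (hflags i hi).1
        ((hπ.sat_vq_iff hdet (by omega) (by omega) _).2 hQ.2))
      (fun i j hj => (hinc_p i j hj).1) (fun i j hj => (hkeep_p i j hj).1)
      (fun i hi => countIcc_le_nP (fun _ hℓ => hℓ.1) hi)
  have hfl : ∀ i ≤ n, Sat K (vfl p (Fcount K (π 0) part p i)) (π (i + 1)) :=
    hπ.sat_counter hstart.2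
      (fun i hi hQ => hQ.1 ▸ sat_impl_iff.1 (hflags i hi).2
        (mt (hπ.sat_vq_iff hdet (by omega) (by omega) _).1 hQ.2))
      (fun i j hj => (hinc_p i j hj).2) (fun i j hj => (hkeep_p i j hj).2)
      (fun i hi => countIcc_le_nP (fun _ hℓ => hℓ.1) hi)
  rintro (_ | i) hi1 hin
  · omega
  · exact ⟨htr i (by omega), hfl i (by omega)⟩

/-- Along any path from `w₀`, at time `i ∈ {1,…,n+1}` the true-counter of part
`p` has reached at least `T_p(i−1)` and the false-counter at least `F_p(i−1)`. -/
theorem statement11 (n k : ℕ) (part tg : ℕ → ℕ)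
    (hpart : ∀ i, 1 ≤ i → i ≤ n → 1 ≤ part i ∧ part i ≤ k)
    (F : CTL PVar) (hF : F.IsProp)
    (hvars : ∀ v ∈ F.vars, ∃ i, 1 ≤ i ∧ i ≤ n ∧ v = PVar.q i)
    (K : Kripke PVar) (w0 : K.W)
    (h : Sat K (.and (determined n) (.and (depthForm n) (.and (setCounter n part)
          (.and (incCounter n k part)
            (.and (countInit k) (countMonotone1 n k part)))))) w0) :
    ∀ π, K.IsPath π → π 0 = w0 →
      ∀ p, 1 ≤ p → p ≤ k → ∀ i, 1 ≤ i → i ≤ n + 1 →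
        Sat K (vtr p (Tcount K w0 part p (i-1))) (π i) ∧
        Sat K (vfl p (Fcount K w0 part p (i-1))) (π i) :=
  statement11_general n k part K w0 h
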